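/- arXiv:1307.6749 — 3 statements merged into one kernel-verified Lean document; each statement's English description precedes it below -/
import Mathlib

section
/- For θ > 0, β > 0, t ≥ 0 and λ ≥ 0, β ∫₀ᵗ u^θ(λ,r) dr = log(1 + λ·Δ^θ_t), where Δ^θ_t = (1 − e^{−2βθt})/(2θ). -/
/-- `β ∫₀ᵗ u^θ(λ,r) dr = log(1 + λ Δ^θ_t)` with `Δ^θ_t = (1 − e^{−2βθt})/(2θ)`. -/
theorem integral_u_eq_log (β θ lam t : ℝ) (hβ : 0 < β) (hθ : 0 < θ)
    (hlam : 0 ≤ lam) (ht : 0 ≤ t) :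
    β * ∫ r in (0:ℝ)..t, 2 * θ * lam / ((2 * θ + lam) * Real.exp (2 * β * θ * r) - lam)
      = Real.log (1 + lam * ((1 - Real.exp (-(2 * β * θ * t))) / (2 * θ))) := by
  set g : ℝ → ℝ := fun r => (2 * θ + lam) - lam * Real.exp (-(2 * β * θ * r)) with hg
  have hgpos : ∀ r, 0 ≤ r → 0 < g r := by
    intro r hr
    have h1 : Real.exp (-(2 * β * θ * r)) ≤ 1 := by
      apply Real.exp_le_one_iff.mpr
      have : 0 ≤ 2 * β * θ * r := by positivity
      linarith
    have h2 : lam * Real.exp (-(2 * β * θ * r)) ≤ lam := by nlinarith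
    simp only [hg]; linarith
  have hdenpos : ∀ r, 0 ≤ r → 0 < (2 * θ + lam) * Real.exp (2 * β * θ * r) - lam := by
    intro r hr
    have h1 : (1:ℝ) ≤ Real.exp (2 * β * θ * r) := by
      apply Real.one_le_exp; positivity
    nlinarith
  have hderiv : ∀ r ∈ Set.uIcc (0:ℝ) t,
      HasDerivAt (fun x => Real.log (g x))
        (β * (2 * θ * lam / ((2 * θ + lam) * Real.exp (2 * β * θ * r) - lam))) r := by
    intro r hr
    have hr0 : 0 ≤ r := by
      rw [Set.uIcc_of_le ht] at hr; exact hr.1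
    have h1 : HasDerivAt (fun x : ℝ => -(2 * β * θ * x)) (-(2 * β * θ)) r := by
      simpa [Pi.neg_def] using ((hasDerivAt_id r).const_mul (2 * β * θ)).neg
    have h2 := h1.exp
    have h3 :=
      (hasDerivAt_const r (2 * θ + lam)).sub (h2.const_mul lam)
    have h4 := h3.log (ne_of_gt (hgpos r hr0))
    convert h4 using 1
    · rfl
    have hE : Real.exp (-(2 * β * θ * r)) = (Real.exp (2 * β * θ * r))⁻¹ :=
      Real.exp_neg _
    have hEpos : 0 < Real.exp (2 * β * θ * r) := Real.exp_pos _
    have hden : (2 * θ + lam) * Real.exp (2 * β * θ * r) - lam ≠ 0 :=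
      ne_of_gt (hdenpos r hr0)
    have hgr : (2 * θ + lam) - lam * (Real.exp (2 * β * θ * r))⁻¹ ≠ 0 := by
      rw [← hE]; exact ne_of_gt (hgpos r hr0)
    simp only [hE, Pi.sub_apply]
    field_simp
    ring
  have hcont : ContinuousOn
      (fun r => β * (2 * θ * lam / ((2 * θ + lam) * Real.exp (2 * β * θ * r) - lam)))
      (Set.uIcc (0:ℝ) t) := by
    apply ContinuousOn.mul continuousOn_const
    apply ContinuousOn.div continuousOn_const
    · exact (Continuous.continuousOn (by continuity))
    · intro r hr
      have hr0 : 0 ≤ r := by rw [Set.uIcc_of_le ht] at hr; exact hr.1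
      exact ne_of_gt (hdenpos r hr0)
  have hint := intervalIntegral.integral_eq_sub_of_hasDerivAt hderiv
    (hcont.intervalIntegrable)
  rw [← intervalIntegral.integral_const_mul] at *
  rw [hint]
  have hg0 : g 0 = 2 * θ := by simp [hg]
  have hgt : g t = (2 * θ + lam) - lam * Real.exp (-(2 * β * θ * t)) := rfl
  have hgtpos : 0 < g t := hgpos t ht
  rw [hgt] at hgtpos
  rw [hg0, hgt, ← Real.log_div (ne_of_gt hgtpos) (by positivity)]
  congr 1
  field_simp
  ring
end

section
/- Let β > 0 and μ a σ-finite Borel measure on (0,∞) with total mass ⟨μ,1⟩ > 1/2. Then ∫₀¹ exp(−2 ∫₀^∞ log(1 − e^{−2βθt}) μ(dθ)) dt = +∞. -/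
open MeasureTheory
open scoped ENNReal

lemma aux_rpow_lintegral_top {c ε p : ℝ} (hc : 0 < c) (hε : 0 < ε) (hp : p < -1) :
    ∫⁻ t in Set.Ioo (0:ℝ) ε, ENNReal.ofReal ((c * t) ^ p) = ⊤ := by
  by_contra h
  have hlt : ∫⁻ t in Set.Ioo (0:ℝ) ε, ENNReal.ofReal ((c * t) ^ p) < ⊤ := lt_top_iff_ne_top.2 h
  have hmeas : Measurable fun t : ℝ => (c * t) ^ p := by fun_prop
  have hpos : 0 ≤ᵐ[volume.restrict (Set.Ioo (0:ℝ) ε)] fun t : ℝ => (c * t) ^ p := by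
    filter_upwards [ae_restrict_mem measurableSet_Ioo] with t ht
    have : 0 < c * t := mul_pos hc ht.1
    positivity
  have hint : IntegrableOn (fun t : ℝ => (c * t) ^ p) (Set.Ioo (0:ℝ) ε) :=
    ⟨hmeas.aestronglyMeasurable, (hasFiniteIntegral_iff_ofReal hpos).2 hlt⟩
  have hint2 : IntegrableOn (fun t : ℝ => c ^ p * t ^ p) (Set.Ioo (0:ℝ) ε) := by
    refine hint.congr_fun (fun t ht => ?_) measurableSet_Ioo
    exact Real.mul_rpow hc.le ht.1.le
  have hcp : c ^ p ≠ 0 := (Real.rpow_pos_of_pos hc p).ne'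
  have hint3 : IntegrableOn (fun t : ℝ => t ^ p) (Set.Ioo (0:ℝ) ε) := by
    have h4 : IntegrableOn (fun t : ℝ => (c ^ p)⁻¹ * (c ^ p * t ^ p)) (Set.Ioo (0:ℝ) ε) :=
      hint2.const_mul ((c ^ p)⁻¹)
    refine h4.congr_fun (fun t _ => ?_) measurableSet_Ioo
    field_simp
  rw [intervalIntegral.integrableOn_Ioo_rpow_iff hε] at hint3
  linarith

/-- If `⟨μ,1⟩ > 1/2` then `∫₀¹ exp(−2 ∫ log(1 − e^{−2βθt}) μ(dθ)) dt = ∞`.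
The inner integral of `−log(1 − e^{−2βθt}) ≥ 0` is taken in `[0,∞]`; if it is
infinite, the outer integrand is `∞`. -/
theorem integral_exp_eq_top (β : ℝ) (hβ : 0 < β)
    (μ : Measure ℝ) [SigmaFinite μ] (hμ : μ (Set.Iic 0) = 0)
    (hmass : 1 / 2 < μ (Set.Ioi (0:ℝ))) :
    ∫⁻ t in Set.Ioo (0:ℝ) 1,
      (if (∫⁻ θ in Set.Ioi (0:ℝ),
            ENNReal.ofReal (-Real.log (1 - Real.exp (-(2 * β * θ * t)))) ∂μ) = ⊤ then ⊤
        else ENNReal.ofReal (Real.exp (2 * (∫⁻ θ in Set.Ioi (0:ℝ),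
            ENNReal.ofReal (-Real.log (1 - Real.exp (-(2 * β * θ * t)))) ∂μ).toReal))) = ⊤ := by
  -- Step 1: find a finite-measure set A ⊆ Ioc 0 n with μ A > 1/2
  set B : ℕ → Set ℝ := fun k => Set.Ioc 0 (k : ℝ) ∩ spanningSets μ k with hB
  have hBmono : Monotone B := fun i j hij =>
    Set.inter_subset_inter (Set.Ioc_subset_Ioc_right (by exact_mod_cast hij))
      (monotone_spanningSets μ hij)
  have hBunion : (⋃ k, B k) = Set.Ioi (0:ℝ) := by
    ext x
    simp only [Set.mem_iUnion, hB, Set.mem_inter_iff, Set.mem_Ioc, Set.mem_Ioi]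
    constructor
    · rintro ⟨k, ⟨hx, _⟩, _⟩; exact hx
    · intro hx
      obtain ⟨k, hk⟩ := exists_nat_ge x
      obtain ⟨m, hm⟩ := Set.mem_iUnion.1 ((iUnion_spanningSets μ) ▸ Set.mem_univ x)
      refine ⟨max k m, ⟨hx, hk.trans (by exact_mod_cast le_max_left k m)⟩,
        monotone_spanningSets μ (le_max_right k m) hm⟩
  have hsup : 1 / 2 < ⨆ k, μ (B k) := by
    rw [← Monotone.measure_iUnion hBmono, hBunion]; exact hmass
  obtain ⟨k, hk⟩ := lt_iSup_iff.1 hsup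
  set A : Set ℝ := B k with hA
  have hAsub : A ⊆ Set.Ioc 0 (k:ℝ) := Set.inter_subset_left
  have hAfin : μ A ≠ ⊤ :=
    ((measure_mono Set.inter_subset_right).trans_lt (measure_spanningSets_lt_top μ k)).ne
  set a : ℝ := (μ A).toReal with ha
  have hahalf : 1 / 2 < a := by
    have h2 : (1/2 : ℝ≥0∞) ≠ ⊤ := by simp
    have := (ENNReal.toReal_lt_toReal h2 hAfin).2 hk
    simpa using this
  set n : ℝ := (k : ℝ) + 1 with hn
  have hn0 : 0 < n := by positivity
  set c : ℝ := 2 * β * n with hc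
  have hc0 : 0 < c := by positivity
  set ε : ℝ := min 1 c⁻¹ with hε
  have hε0 : 0 < ε := lt_min one_pos (by positivity)
  have hε1 : ε ≤ 1 := min_le_left _ _
  -- pointwise bound on the outer integrand for t ∈ Ioo 0 ε
  have key : ∀ t ∈ Set.Ioo (0:ℝ) ε,
      ENNReal.ofReal ((c * t) ^ (-(2 * a))) ≤
      (if (∫⁻ θ in Set.Ioi (0:ℝ),
            ENNReal.ofReal (-Real.log (1 - Real.exp (-(2 * β * θ * t)))) ∂μ) = ⊤ then ⊤
        else ENNReal.ofReal (Real.exp (2 * (∫⁻ θ in Set.Ioi (0:ℝ),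
            ENNReal.ofReal (-Real.log (1 - Real.exp (-(2 * β * θ * t)))) ∂μ).toReal))) := by
    intro t ht
    have ht0 : 0 < t := ht.1
    have hct1 : c * t < 1 := by
      have : t < c⁻¹ := lt_of_lt_of_le ht.2 (min_le_right _ _)
      calc c * t < c * c⁻¹ := by exact (mul_lt_mul_iff_right₀ hc0).2 this
        _ = 1 := mul_inv_cancel₀ hc0.ne'
    have hct0 : 0 < c * t := mul_pos hc0 ht0
    have hL0 : 0 ≤ -Real.log (c * t) := by
      have := Real.log_nonpos hct0.le hct1.le
      linarith
    set I : ℝ≥0∞ := ∫⁻ θ in Set.Ioi (0:ℝ),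
        ENNReal.ofReal (-Real.log (1 - Real.exp (-(2 * β * θ * t)))) ∂μ with hI
    -- lower bound on inner integral
    have hinner : μ A * ENNReal.ofReal (-Real.log (c * t)) ≤ I := by
      have h1 : ∫⁻ θ in A, ENNReal.ofReal (-Real.log (c * t)) ∂μ
          ≤ ∫⁻ θ in A, ENNReal.ofReal (-Real.log (1 - Real.exp (-(2 * β * θ * t)))) ∂μ := by
        refine setLIntegral_mono' (measurableSet_Ioc.inter (measurableSet_spanningSets μ k)) ?_
        intro θ hθ
        have hθ' := hAsub hθ
        have hx0 : 0 < 2 * β * θ * t := by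
          have := hθ'.1; positivity
        have hxc : 2 * β * θ * t ≤ c * t := by
          have h1 : θ ≤ n := le_trans hθ'.2 (by simp [hn])
          have : 2 * β * θ ≤ 2 * β * n := by nlinarith
          nlinarith
        have hexp1 : Real.exp (-(2 * β * θ * t)) < 1 := Real.exp_lt_one_iff.2 (by linarith)
        have hlow : 0 < 1 - Real.exp (-(2 * β * θ * t)) := by linarith
        have hup : 1 - Real.exp (-(2 * β * θ * t)) ≤ 2 * β * θ * t := by
          have := Real.add_one_le_exp (-(2 * β * θ * t)); linarith
        have hlog : Real.log (1 - Real.exp (-(2 * β * θ * t))) ≤ Real.log (c * t) :=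
          (Real.log_le_log hlow hup).trans (Real.log_le_log hx0 hxc)
        exact ENNReal.ofReal_le_ofReal (by linarith)
      have h2 : ∫⁻ θ in A, ENNReal.ofReal (-Real.log (1 - Real.exp (-(2 * β * θ * t)))) ∂μ ≤ I :=
        lintegral_mono_set (fun θ hθ => (hAsub hθ).1)
      calc μ A * ENNReal.ofReal (-Real.log (c * t))
          = ∫⁻ _ in A, ENNReal.ofReal (-Real.log (c * t)) ∂μ := by
            rw [setLIntegral_const]; ring
        _ ≤ I := h1.trans h2
    by_cases htop : I = ⊤
    · simp [htop]
    · rw [if_neg htop]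
      refine ENNReal.ofReal_le_ofReal ?_
      have htoReal : a * (-Real.log (c * t)) ≤ I.toReal := by
        have := ENNReal.toReal_mono htop hinner
        rwa [ENNReal.toReal_mul, ENNReal.toReal_ofReal hL0] at this
      have : (c * t) ^ (-(2 * a)) = Real.exp (2 * (a * (-Real.log (c * t)))) := by
        rw [Real.rpow_def_of_pos hct0]; ring_nf
      rw [this]
      exact Real.exp_le_exp.2 (by linarith)
  -- conclude
  rw [eq_top_iff]
  calc (⊤ : ℝ≥0∞) = ∫⁻ t in Set.Ioo (0:ℝ) ε, ENNReal.ofReal ((c * t) ^ (-(2 * a))) :=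
        (aux_rpow_lintegral_top hc0 hε0 (by linarith)).symm
    _ ≤ ∫⁻ t in Set.Ioo (0:ℝ) ε,
        (if (∫⁻ θ in Set.Ioi (0:ℝ),
            ENNReal.ofReal (-Real.log (1 - Real.exp (-(2 * β * θ * t)))) ∂μ) = ⊤ then ⊤
        else ENNReal.ofReal (Real.exp (2 * (∫⁻ θ in Set.Ioi (0:ℝ),
            ENNReal.ofReal (-Real.log (1 - Real.exp (-(2 * β * θ * t)))) ∂μ).toReal))) :=
        setLIntegral_mono' measurableSet_Ioo key
    _ ≤ _ := lintegral_mono_set (Set.Ioo_subset_Ioo_right hε1)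
end

section
/- Let β > 0 and μ a σ-finite Borel measure on (0,∞) with ∫_{(0,1)} |log θ| μ(dθ) < ∞, ∫_{[1,∞)} θ^{−1} μ(dθ) < ∞, and total mass ⟨μ,1⟩ < 1/2. Then there exists ε > 0 such that ∫₀^ε exp(−2 ∫₀^∞ log(1 − e^{−2βθt}) μ(dθ)) dt < +∞. -/
open MeasureTheory

/-- Key pointwise bound: if `0 < y ≤ min x 1` then `y/2 ≤ 1 - e^{-x}`. -/
lemma aux_half_le (x y : ℝ) (hy : 0 < y) (hyx : y ≤ x) (hy1 : y ≤ 1) :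
    y / 2 ≤ 1 - Real.exp (-x) := by
  have h1 : 1 + y ≤ Real.exp y := by linarith [Real.add_one_le_exp y]
  have h2 : Real.exp (-x) ≤ Real.exp (-y) := Real.exp_le_exp.mpr (by linarith)
  have h3 : Real.exp (-y) = (Real.exp y)⁻¹ := Real.exp_neg y
  have hpos : (0:ℝ) < 1 + y := by linarith
  have h4 : (Real.exp y)⁻¹ ≤ (1 + y)⁻¹ := by
    apply inv_anti₀ hpos h1
  have h5 : (1 + y)⁻¹ ≤ 1 - y / 2 := by
    rw [inv_le_iff_one_le_mul₀ hpos]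
    nlinarith
  linarith [h2, h3 ▸ h4]

/-- If `μ` satisfies the integrability conditions and `⟨μ,1⟩ < 1/2`, then for some
`ε > 0`, `∫₀^ε exp(−2 ∫ log(1 − e^{−2βθt}) μ(dθ)) dt < ∞`. -/
theorem integral_exp_lt_top (β : ℝ) (hβ : 0 < β)
    (μ : Measure ℝ) [SigmaFinite μ] (hμ : μ (Set.Iic 0) = 0)
    (h1 : ∫⁻ θ in Set.Ioo (0:ℝ) 1, ENNReal.ofReal |Real.log θ| ∂μ < ⊤)
    (h2 : ∫⁻ θ in Set.Ici (1:ℝ), ENNReal.ofReal θ⁻¹ ∂μ < ⊤)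
    (hmass : μ (Set.Ioi (0:ℝ)) < 1 / 2) :
    ∃ ε : ℝ, 0 < ε ∧
      ∫⁻ t in Set.Ioo (0:ℝ) ε,
        ENNReal.ofReal (Real.exp (-2 *
          ∫ θ in Set.Ioi (0:ℝ), Real.log (1 - Real.exp (-(2 * β * θ * t))) ∂μ)) < ⊤ := by
  -- μ is a finite measure
  have hμuniv : μ Set.univ < ⊤ := by
    have : μ Set.univ ≤ μ (Set.Iic 0) + μ (Set.Ioi 0) := by
      rw [← Set.Iic_union_Ioi (a := (0:ℝ))]
      exact measure_union_le _ _
    calc μ Set.univ ≤ μ (Set.Iic 0) + μ (Set.Ioi 0) := this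
    _ = μ (Set.Ioi 0) := by rw [hμ, zero_add]
    _ < ⊤ := hmass.trans_le le_top
  haveI : IsFiniteMeasure μ := ⟨hμuniv⟩
  set m : ℝ := (μ (Set.Ioi (0:ℝ))).toReal with hm_def
  have hmne : μ (Set.Ioi (0:ℝ)) ≠ ⊤ := (hmass.trans_le le_top).ne
  have hm : m < 1 / 2 := by
    have h := (ENNReal.toReal_lt_toReal hmne (by norm_num)).mpr hmass
    simpa using h
  have hm0 : 0 ≤ m := ENNReal.toReal_nonneg
  -- integrability of |log| on (0,1)
  have hlogmeas : Measurable fun θ : ℝ => |Real.log θ| := Real.measurable_log.abs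
  have hlogint : IntegrableOn (fun θ : ℝ => |Real.log θ|) (Set.Ioo 0 1) μ := by
    refine ⟨hlogmeas.aestronglyMeasurable, ?_⟩
    rw [hasFiniteIntegral_iff_ofReal (ae_of_all _ fun θ => abs_nonneg _)]
    exact h1
  set A : ℝ := ∫ θ in Set.Ioo (0:ℝ) 1, |Real.log θ| ∂μ with hA_def
  have hA0 : 0 ≤ A := integral_nonneg fun _ => abs_nonneg _
  -- choose ε
  refine ⟨(2 * β)⁻¹, by positivity, ?_⟩
  set K : ℝ := Real.exp (2 * A + 2 * m * Real.log 2) * (2 * β) ^ (-(2 * m)) with hK_def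
  -- pointwise bound for t ∈ (0, ε)
  have key : ∀ t ∈ Set.Ioo (0:ℝ) (2 * β)⁻¹,
      ENNReal.ofReal (Real.exp (-2 *
          ∫ θ in Set.Ioi (0:ℝ), Real.log (1 - Real.exp (-(2 * β * θ * t))) ∂μ))
        ≤ ENNReal.ofReal (K * t ^ (-(2 * m))) := by
    intro t ht
    obtain ⟨ht0, htε⟩ := ht
    have h2bt : 0 < 2 * β * t := by positivity
    have h2bt1 : 2 * β * t < 1 := by
      have h := mul_lt_mul_of_pos_left htε (by positivity : (0:ℝ) < 2 * β)
      rwa [mul_inv_cancel₀ (by positivity : (2*β:ℝ) ≠ 0)] at h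
    -- the integrand and its dominating function
    set f : ℝ → ℝ := fun θ => Real.log (1 - Real.exp (-(2 * β * θ * t))) with hf_def
    set c : ℝ := Real.log 2 - Real.log (2 * β * t) with hc_def
    have hc0 : 0 ≤ c := by
      have := Real.log_nonpos (le_of_lt h2bt) (le_of_lt h2bt1)
      have h2 : (0:ℝ) ≤ Real.log 2 := Real.log_nonneg (by norm_num)
      simp only [hc_def]; linarith
    set G : ℝ → ℝ := fun θ => c + (Set.Ioo (0:ℝ) 1).indicator (fun θ => |Real.log θ|) θ
      with hG_def
    have hGnonneg : ∀ θ, 0 ≤ G θ := by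
      intro θ
      have : 0 ≤ (Set.Ioo (0:ℝ) 1).indicator (fun θ => |Real.log θ|) θ :=
        Set.indicator_nonneg (fun θ _ => abs_nonneg _) θ
      simp only [hG_def]; linarith
    -- pointwise bounds on (0,∞)
    have hbound : ∀ θ ∈ Set.Ioi (0:ℝ), -(G θ) ≤ f θ ∧ f θ ≤ 0 := by
      intro θ hθ
      have hθ0 : (0:ℝ) < θ := hθ
      set y : ℝ := 2 * β * t * min θ 1 with hy_def
      have hy0 : 0 < y := by
        have : (0:ℝ) < min θ 1 := lt_min hθ0 one_pos
        positivity
      have hyx : y ≤ 2 * β * θ * t := by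
        have h1 : min θ 1 ≤ θ := min_le_left _ _
        have := mul_le_mul_of_nonneg_left h1 (le_of_lt h2bt)
        calc y = 2 * β * t * min θ 1 := rfl
        _ ≤ 2 * β * t * θ := this
        _ = 2 * β * θ * t := by ring
      have hy1 : y ≤ 1 := by
        have h1 : min θ 1 ≤ 1 := min_le_right _ _
        calc y ≤ 2 * β * t * 1 := by
              exact mul_le_mul_of_nonneg_left h1 (le_of_lt h2bt)
        _ = 2 * β * t := by ring
        _ ≤ 1 := le_of_lt h2bt1
      have hhalf : y / 2 ≤ 1 - Real.exp (-(2 * β * θ * t)) :=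
        aux_half_le _ _ hy0 hyx hy1
      have hfge : Real.log (y / 2) ≤ f θ := by
        apply Real.log_le_log (by positivity) hhalf
      have hlogy : Real.log (y / 2) = Real.log (2 * β * t) + Real.log (min θ 1)
          - Real.log 2 := by
        rw [hy_def, Real.log_div (by positivity) (by norm_num),
          Real.log_mul (by positivity) (by positivity : (0:ℝ) < min θ 1).ne']
      have hind : -Real.log (min θ 1)
          ≤ (Set.Ioo (0:ℝ) 1).indicator (fun θ => |Real.log θ|) θ := by
        rcases le_or_gt 1 θ with hθ1 | hθ1
        · rw [min_eq_right hθ1, Real.log_one, neg_zero]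
          exact Set.indicator_nonneg (fun θ _ => abs_nonneg _) θ
        · rw [min_eq_left (le_of_lt hθ1),
            Set.indicator_of_mem (Set.mem_Ioo.mpr ⟨hθ0, hθ1⟩)]
          have : Real.log θ ≤ 0 := Real.log_nonpos (le_of_lt hθ0) (le_of_lt hθ1)
          rw [abs_of_nonpos this]
      constructor
      · have : -(G θ) ≤ Real.log (y / 2) := by
          simp only [hG_def, hc_def]
          rw [hlogy]
          linarith
        exact this.trans hfge
      · apply Real.log_nonpos
        · have := Real.exp_pos (-(2 * β * θ * t)); linarith
        · have := Real.exp_pos (-(2 * β * θ * t)); linarith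
    -- integrability
    have hGind : Integrable ((Set.Ioo (0:ℝ) 1).indicator (fun θ => |Real.log θ|)) μ :=
      (integrable_indicator_iff measurableSet_Ioo).mpr hlogint
    have hGint : IntegrableOn G (Set.Ioi (0:ℝ)) μ :=
      ((integrable_const c).add hGind).integrableOn
    have hfmeas : Measurable f := by
      apply Real.measurable_log.comp
      exact (measurable_const.sub (((measurable_const.mul measurable_id).mul
        measurable_const).neg.exp))
    have hfint : IntegrableOn f (Set.Ioi (0:ℝ)) μ := by
      refine Integrable.mono hGint hfmeas.aestronglyMeasurable ?_
      rw [ae_restrict_iff' measurableSet_Ioi]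
      refine ae_of_all _ fun θ hθ => ?_
      obtain ⟨hlo, hhi⟩ := hbound θ hθ
      rw [Real.norm_eq_abs, Real.norm_eq_abs, abs_of_nonpos hhi,
        abs_of_nonneg (hGnonneg θ)]
      linarith
    -- lower bound on the integral
    have hIineq : -((c * m) + A) ≤ ∫ θ in Set.Ioi (0:ℝ), f θ ∂μ := by
      have hGval : ∫ θ in Set.Ioi (0:ℝ), G θ ∂μ = c * m + A := by
        rw [hG_def]
        rw [integral_add (integrable_const c).integrableOn hGind.integrableOn]
        congr 1
        · rw [setIntegral_const, smul_eq_mul, mul_comm]; rfl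
        · rw [integral_indicator measurableSet_Ioo, Measure.restrict_restrict
            measurableSet_Ioo, Set.inter_eq_self_of_subset_left Set.Ioo_subset_Ioi_self]
      calc -((c * m) + A) = ∫ θ in Set.Ioi (0:ℝ), -(G θ) ∂μ := by
            rw [integral_neg, hGval]
      _ ≤ ∫ θ in Set.Ioi (0:ℝ), f θ ∂μ := by
            exact setIntegral_mono_on hGint.neg hfint measurableSet_Ioi
              fun θ hθ => (hbound θ hθ).1
    -- conclude the pointwise exp bound
    apply ENNReal.ofReal_le_ofReal
    have hexp : -2 * (∫ θ in Set.Ioi (0:ℝ), f θ ∂μ) ≤ 2 * (c * m) + 2 * A := by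
      linarith
    calc Real.exp (-2 * ∫ θ in Set.Ioi (0:ℝ), f θ ∂μ)
        ≤ Real.exp (2 * (c * m) + 2 * A) := Real.exp_le_exp.mpr hexp
      _ = Real.exp (2 * A + 2 * m * Real.log 2) *
            Real.exp (Real.log (2 * β * t) * (-(2 * m))) := by
          rw [← Real.exp_add]; congr 1; simp only [hc_def]; ring
      _ = Real.exp (2 * A + 2 * m * Real.log 2) * (2 * β * t) ^ (-(2 * m)) := by
          rw [Real.rpow_def_of_pos h2bt]
      _ = K * t ^ (-(2 * m)) := by
          rw [hK_def, Real.mul_rpow (by positivity) (le_of_lt ht0)]; ring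
  -- finish: the dominating function is integrable on (0, ε)
  have hrint : IntegrableOn (fun t : ℝ => K * t ^ (-(2 * m))) (Set.Ioo 0 (2 * β)⁻¹) := by
    apply Integrable.const_mul
    exact (intervalIntegral.integrableOn_Ioo_rpow_iff (by positivity)).mpr (by linarith)
  calc ∫⁻ t in Set.Ioo (0:ℝ) (2 * β)⁻¹,
        ENNReal.ofReal (Real.exp (-2 *
          ∫ θ in Set.Ioi (0:ℝ), Real.log (1 - Real.exp (-(2 * β * θ * t))) ∂μ))
      ≤ ∫⁻ t in Set.Ioo (0:ℝ) (2 * β)⁻¹, ENNReal.ofReal (K * t ^ (-(2 * m))) := by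
        refine setLIntegral_mono ?_ key
        exact ((measurable_id.pow measurable_const).const_mul K).ennreal_ofReal
    _ < ⊤ := hrint.setLIntegral_lt_top
end
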